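/- arXiv:2303.17186 — 2 statements merged into one kernel-verified Lean document; each statement's English description precedes it below -/
import Mathlib

section
/- For every sufficiently small ε > 0 there exist N₀ and c > 0 such that for all integers N ≥ N₀ the following holds. Let (𝓛,𝒫) be an (N,ε)-extremal configuration and let C_1, …, C_{r²} be a partition of 𝒫 into cells, where r is an integer with N^{1/3−ε} ≤ r ≤ N^{1/3+ε}, such that every cell contains at most N^{1+ε}/r² points. Then there is a subset 𝓛′ ⊆ 𝓛 with |I(𝓛′,𝒫)| ≥ c·N^{4/3−ε} such that every line of 𝓛′ is incident to points lying in at least r^{1−20ε} distinct cells. -/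
open scoped Classical

noncomputable section

/-- The plane. -/
abbrev Point := ℝ × ℝ

/-- A line in the plane: a one-dimensional affine subspace of `ℝ²`. -/
def IsLine (l : Set Point) : Prop :=
  ∃ a b c : ℝ, (a, b) ≠ (0, 0) ∧ l = {p : Point | a * p.1 + b * p.2 = c}

/-- The number of incidences between a finite set of lines and a finite set of points. -/
def incCount (L : Finset (Set Point)) (P : Finset Point) : ℕ :=
  ((L ×ˢ P).filter fun x => x.2 ∈ x.1).card

/-- An `(N,ε)`-extremal configuration: `N^{1-ε} ≤ |𝓛|, |𝒫| ≤ N` and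
`|I(𝓛,𝒫)| ≥ N^{4/3-ε}`. -/
def ExtremalConfig (N : ℕ) (ε : ℝ) (L : Finset (Set Point)) (P : Finset Point) : Prop :=
  (∀ l ∈ L, IsLine l) ∧
  (N : ℝ) ^ ((1 : ℝ) - ε) ≤ L.card ∧ (L.card : ℝ) ≤ N ∧
  (N : ℝ) ^ ((1 : ℝ) - ε) ≤ P.card ∧ (P.card : ℝ) ≤ N ∧
  (N : ℝ) ^ ((4 : ℝ)/3 - ε) ≤ incCount L P

/-! Keep the lines meeting at least `r^{1-20ε}` cells. Since two points determine a line,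
Cauchy–Schwarz gives `I(L, C) ≤ |L| + |C| √|L|` inside each cell. Summing over the cells and
applying Cauchy–Schwarz once more, with `∑ |C_i|² ≤ N^{2+ε}/r²` and
`∑_i #{bad lines meeting C_i} ≤ N r^{1-20ε}`, the bad lines carry at most `2 N^{4/3-2ε}`
incidences, which is at most half of `N^{4/3-ε}` once `N^ε ≥ 4`. -/

namespace IsLine

lemma mem_iff_cross_eq_zero {l : Set Point} (hl : IsLine l) {p q : Point} (hp : p ∈ l) (hq : q ∈ l)
    (hpq : p ≠ q) (z : Point) :
    z ∈ l ↔ (q.1 - p.1) * (z.2 - p.2) = (q.2 - p.2) * (z.1 - p.1) := by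
  obtain ⟨a, b, c, hab, rfl⟩ := hl
  simp only [Set.mem_ofPred_eq] at hp hq ⊢
  have hu : (q.1 - p.1, q.2 - p.2) ≠ (0, 0) := fun h => hpq <| by
    simp only [Prod.mk.injEq, sub_eq_zero] at h
    exact Prod.ext h.1.symm h.2.symm
  have cancel : ∀ {x y t : ℝ}, (x, y) ≠ (0, 0) → x * t = 0 → y * t = 0 → t = 0 :=
    fun hxy hx hy => (smul_eq_zero.1 (show _ • (_, _) = (0 : ℝ × ℝ) from by
      ext <;> simp [mul_comm _ (_ : ℝ), hx, hy])).resolve_right hxy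
  constructor
  · intro hz
    refine sub_eq_zero.1 (cancel hab ?_ ?_)
    · linear_combination (z.2 - p.2) * (hq - hp) - (q.2 - p.2) * (hz - hp)
    · linear_combination (q.1 - p.1) * (hz - hp) - (z.1 - p.1) * (hq - hp)
  · intro hz
    have h : a * (z.1 - p.1) + b * (z.2 - p.2) = 0 := cancel hu
      (by linear_combination (z.1 - p.1) * (hq - hp) + b * hz)
      (by linear_combination (z.2 - p.2) * (hq - hp) - a * hz)
    linear_combination h + hp

lemma eq_of_mem_of_mem {l₁ l₂ : Set Point} (h₁ : IsLine l₁) (h₂ : IsLine l₂) {p q : Point}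
    (hpq : p ≠ q) (hp₁ : p ∈ l₁) (hq₁ : q ∈ l₁) (hp₂ : p ∈ l₂) (hq₂ : q ∈ l₂) : l₁ = l₂ :=
  Set.ext fun z => (h₁.mem_iff_cross_eq_zero hp₁ hq₁ hpq z).trans
    (h₂.mem_iff_cross_eq_zero hp₂ hq₂ hpq z).symm

end IsLine

lemma incCount_eq_sum (L : Finset (Set Point)) (P : Finset Point) :
    incCount L P = ∑ l ∈ L, (P.filter (· ∈ l)).card := by
  rw [incCount, Finset.card_filter, Finset.sum_product]
  exact Finset.sum_congr rfl fun l _ => (Finset.card_filter _ _).symm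

lemma incCount_filter_add_incCount_filter_not (L : Finset (Set Point)) (P : Finset Point)
    (q : Set Point → Prop) [DecidablePred q] :
    incCount (L.filter q) P + incCount (L.filter (¬ q ·)) P = incCount L P := by
  simp only [incCount_eq_sum]
  exact Finset.sum_filter_add_sum_filter_not L q _

-- Two distinct points lie on at most one line, so the sets of ordered pairs of distinct
-- points on the lines of `L` are disjoint.
lemma sum_card_offDiag_le {L : Finset (Set Point)} (hL : ∀ l ∈ L, IsLine l) (P : Finset Point) :
    ∑ l ∈ L, (P.filter (· ∈ l)).offDiag.card ≤ P.offDiag.card := by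
  rw [← Finset.card_biUnion]
  · exact Finset.card_le_card <| Finset.biUnion_subset.2 fun l _ =>
      Finset.offDiag_mono (Finset.filter_subset _ _)
  · intro l hl l' hl' hne
    refine Finset.disjoint_left.2 fun x hx hx' => hne ?_
    simp only [Finset.mem_offDiag, Finset.mem_filter] at hx hx'
    exact (hL l hl).eq_of_mem_of_mem (hL l' hl') hx.2.2 hx.1.2 hx.2.1.2 hx'.1.2 hx'.2.1.2

lemma sum_sq_card_filter_le {L : Finset (Set Point)} (hL : ∀ l ∈ L, IsLine l) (P : Finset Point) :
    ∑ l ∈ L, (P.filter (· ∈ l)).card ^ 2 ≤ incCount L P + P.card ^ 2 := by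
  have hsq : ∀ s : Finset Point, s.card ^ 2 = s.offDiag.card + s.card := fun s => by
    rw [Finset.offDiag_card, sq, Nat.sub_add_cancel (Nat.le_mul_self _)]
  simp only [hsq, Finset.sum_add_distrib, ← incCount_eq_sum]
  have hP : P.offDiag.card ≤ P.card ^ 2 := by
    rw [Finset.offDiag_card, sq]
    exact Nat.sub_le _ _
  linarith [sum_card_offDiag_le hL P]

lemma le_add_mul_sqrt_of_sq_le {x m n : ℝ} (hm : 0 ≤ m) (hn : 0 ≤ n)
    (h : x ^ 2 ≤ m * (x + n ^ 2)) : x ≤ m + n * √m := by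
  obtain ⟨t, ht, rfl⟩ : ∃ t, 0 ≤ t ∧ m = t ^ 2 := ⟨√m, Real.sqrt_nonneg m, (Real.sq_sqrt hm).symm⟩
  rw [Real.sqrt_sq ht]
  by_contra! hx
  have hnt : 0 ≤ n * t := mul_nonneg hn ht
  nlinarith [mul_le_mul_of_nonneg_left (hnt.trans (le_add_of_nonneg_left (sq_nonneg t))) hnt]

theorem incCount_le_card_add_mul_sqrt {L : Finset (Set Point)} (hL : ∀ l ∈ L, IsLine l)
    (P : Finset Point) : (incCount L P : ℝ) ≤ L.card + P.card * √L.card := by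
  refine le_add_mul_sqrt_of_sq_le (Nat.cast_nonneg _) (Nat.cast_nonneg _) ?_
  calc (incCount L P : ℝ) ^ 2 = (∑ l ∈ L, ((P.filter (· ∈ l)).card : ℝ)) ^ 2 := by
        rw [incCount_eq_sum, Nat.cast_sum]
    _ ≤ L.card * ∑ l ∈ L, ((P.filter (· ∈ l)).card : ℝ) ^ 2 := sq_sum_le_card_mul_sum_sq
    _ ≤ L.card * (incCount L P + P.card ^ 2) := by
        gcongr
        exact_mod_cast sum_sq_card_filter_le hL P

section Exponents

variable {n r ε : ℝ}

lemma mul_rpow_one_sub_le (hn : 1 ≤ n) (hε : 0 < ε) (hε₀ : ε ≤ 1 / 20) (hr : 0 ≤ r)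
    (hr₂ : r ≤ n ^ ((1 : ℝ) / 3 + ε)) :
    n * r ^ (1 - 20 * ε) ≤ n ^ ((4 : ℝ) / 3 - 2 * ε) :=
  calc n * r ^ (1 - 20 * ε) ≤ n ^ (1 : ℝ) * n ^ (((1 : ℝ) / 3 + ε) * (1 - 20 * ε)) := by
        rw [Real.rpow_one, Real.rpow_mul (by linarith)]
        gcongr
        linarith
    _ ≤ n ^ ((4 : ℝ) / 3 - 2 * ε) := by
        rw [← Real.rpow_add (by linarith)]
        exact Real.rpow_le_rpow_of_exponent_le hn (by nlinarith)

lemma rpow_div_sq_mul_le (hn : 1 ≤ n) (hε : 0 < ε) (hε₀ : ε ≤ 1 / 30)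
    (hr₁ : n ^ ((1 : ℝ) / 3 - ε) ≤ r) :
    n ^ (2 + ε) / r ^ 2 * (n * r ^ (1 - 20 * ε)) ≤ (n ^ ((4 : ℝ) / 3 - 2 * ε)) ^ 2 := by
  have hn₀ : 0 < n := by linarith
  have hr₀ : 0 < r := (Real.rpow_pos_of_pos hn₀ _).trans_le hr₁
  calc n ^ (2 + ε) / r ^ 2 * (n * r ^ (1 - 20 * ε))
      = n ^ (2 + ε) * n ^ (1 : ℝ) * r ^ (-(1 + 20 * ε)) := by
        rw [show -(1 + 20 * ε) = (1 - 20 * ε) - 2 by ring, Real.rpow_sub hr₀ (1 - 20 * ε) 2,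
          Real.rpow_two, Real.rpow_one]
        ring
    _ ≤ n ^ (2 + ε) * n ^ (1 : ℝ) * n ^ (((1 : ℝ) / 3 - ε) * -(1 + 20 * ε)) := by
        rw [Real.rpow_mul hn₀.le]
        exact mul_le_mul_of_nonneg_left
          (Real.rpow_le_rpow_of_nonpos (by positivity) hr₁ (by linarith)) (by positivity)
    _ ≤ n ^ (((4 : ℝ) / 3 - 2 * ε) * 2) := by
        -- the exponent comparison reduces to `20 ε² ≤ 2ε / 3`, whence `ε ≤ 1/30`
        rw [← Real.rpow_add hn₀, ← Real.rpow_add hn₀]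
        exact Real.rpow_le_rpow_of_exponent_le hn (by nlinarith)
    _ = (n ^ ((4 : ℝ) / 3 - 2 * ε)) ^ 2 := by
        rw [Real.rpow_mul hn₀.le, Real.rpow_two]

end Exponents

section Cells

open Function

variable {ι : Type*} [Fintype ι] {L : Finset (Set Point)} {cells : ι → Finset Point}

def cellsMeeting (cells : ι → Finset Point) (l : Set Point) : Finset ι :=
  Finset.univ.filter fun i => ∃ p ∈ cells i, p ∈ l

lemma incCount_biUnion_eq_sum (hdisj : Pairwise (Disjoint on cells)) :
    incCount L (Finset.univ.biUnion cells) =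
      ∑ i, incCount (L.filter fun l => ∃ p ∈ cells i, p ∈ l) (cells i) := by
  simp only [incCount_eq_sum, Finset.filter_biUnion]
  rw [Finset.sum_congr rfl fun l _ => Finset.card_biUnion fun i _ j _ hij =>
    Finset.disjoint_filter_filter (hdisj hij), Finset.sum_comm]
  refine Finset.sum_congr rfl fun i _ => (Finset.sum_filter_of_ne fun l _ hne => ?_).symm
  obtain ⟨p, hp⟩ := Finset.card_ne_zero.1 hne
  exact ⟨p, (Finset.mem_filter.1 hp).1, (Finset.mem_filter.1 hp).2⟩

lemma sum_card_filter_eq_sum_card_cellsMeeting :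
    ∑ i, (L.filter fun l => ∃ p ∈ cells i, p ∈ l).card =
      ∑ l ∈ L, (cellsMeeting cells l).card :=
  (Finset.sum_card_bipartiteAbove_eq_sum_card_bipartiteBelow
    (fun l i => ∃ p ∈ cells i, p ∈ l)).symm

-- Bound each cell by `incCount_le_card_add_mul_sqrt`, then Cauchy–Schwarz over the cells.
theorem incCount_biUnion_le (hL : ∀ l ∈ L, IsLine l) (hdisj : Pairwise (Disjoint on cells)) :
    (incCount L (Finset.univ.biUnion cells) : ℝ) ≤
      ∑ l ∈ L, ((cellsMeeting cells l).card : ℝ) +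
        √(∑ i, ((cells i).card : ℝ) ^ 2) * √(∑ l ∈ L, ((cellsMeeting cells l).card : ℝ)) := by
  set B := fun i => L.filter fun l => ∃ p ∈ cells i, p ∈ l
  have hB : ∀ i, ∀ l ∈ B i, IsLine l := fun i l hl => hL l (Finset.mem_filter.1 hl).1
  have hM : ∑ i, ((B i).card : ℝ) = ∑ l ∈ L, ((cellsMeeting cells l).card : ℝ) := by
    exact_mod_cast sum_card_filter_eq_sum_card_cellsMeeting
  calc (incCount L (Finset.univ.biUnion cells) : ℝ)
      = ∑ i, (incCount (B i) (cells i) : ℝ) := by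
        rw [incCount_biUnion_eq_sum hdisj, Nat.cast_sum]
    _ ≤ ∑ i, (((B i).card : ℝ) + (cells i).card * √(B i).card) :=
        Finset.sum_le_sum fun i _ => incCount_le_card_add_mul_sqrt (hB i) _
    _ = ∑ i, ((B i).card : ℝ) + ∑ i, ((cells i).card : ℝ) * √(B i).card :=
        Finset.sum_add_distrib
    _ ≤ ∑ i, ((B i).card : ℝ) +
          √(∑ i, ((cells i).card : ℝ) ^ 2) * √(∑ i, √((B i).card : ℝ) ^ 2) := by
        gcongr
        exact Real.sum_mul_le_sqrt_mul_sqrt _ _ _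
    _ = _ := by
        simp only [Real.sq_sqrt (Nat.cast_nonneg _), hM]

theorem incCount_le_of_meets_few_cells {n r ε : ℝ} (hL : ∀ l ∈ L, IsLine l)
    (hdisj : Pairwise (Disjoint on cells)) (hn : 1 ≤ n) (hε : 0 < ε) (hε₀ : ε ≤ 1 / 30)
    (hr₁ : n ^ ((1 : ℝ) / 3 - ε) ≤ r) (hr₂ : r ≤ n ^ ((1 : ℝ) / 3 + ε)) (hLn : (L.card : ℝ) ≤ n)
    (hPn : ((Finset.univ.biUnion cells).card : ℝ) ≤ n)
    (hcell : ∀ i, ((cells i).card : ℝ) ≤ n ^ (1 + ε) / r ^ 2)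
    (hfew : ∀ l ∈ L, ((cellsMeeting cells l).card : ℝ) ≤ r ^ (1 - 20 * ε)) :
    (incCount L (Finset.univ.biUnion cells) : ℝ) ≤ 2 * n ^ ((4 : ℝ) / 3 - 2 * ε) := by
  have hr₀ : 0 ≤ r := (Real.rpow_nonneg (by linarith) _).trans hr₁
  have hM : ∑ l ∈ L, ((cellsMeeting cells l).card : ℝ) ≤ n * r ^ (1 - 20 * ε) := calc
    _ ≤ ∑ _l ∈ L, r ^ (1 - 20 * ε) := Finset.sum_le_sum hfew
    _ ≤ n * r ^ (1 - 20 * ε) := by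
      rw [Finset.sum_const, nsmul_eq_mul]
      gcongr
  have hS : ∑ i, ((cells i).card : ℝ) ^ 2 ≤ n ^ (2 + ε) / r ^ 2 := calc
    _ ≤ ∑ i, n ^ (1 + ε) / r ^ 2 * (cells i).card :=
      Finset.sum_le_sum fun i _ => by rw [sq]; gcongr; exact hcell i
    _ ≤ n ^ (1 + ε) / r ^ 2 * n := by
      rw [← Finset.mul_sum]
      gcongr
      rwa [Finset.card_biUnion fun i _ j _ hij => hdisj hij, Nat.cast_sum] at hPn
    _ = n ^ (2 + ε) / r ^ 2 := by
      rw [div_mul_eq_mul_div, ← Real.rpow_add_one (by positivity)]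
      ring_nf
  calc (incCount L (Finset.univ.biUnion cells) : ℝ)
      ≤ ∑ l ∈ L, ((cellsMeeting cells l).card : ℝ) +
          √(∑ i, ((cells i).card : ℝ) ^ 2) * √(∑ l ∈ L, ((cellsMeeting cells l).card : ℝ)) :=
        incCount_biUnion_le hL hdisj
    _ ≤ n * r ^ (1 - 20 * ε) + √(n ^ (2 + ε) / r ^ 2 * (n * r ^ (1 - 20 * ε))) := by
        rw [Real.sqrt_mul (by positivity)]
        gcongr
    _ ≤ n ^ ((4 : ℝ) / 3 - 2 * ε) + √((n ^ ((4 : ℝ) / 3 - 2 * ε)) ^ 2) := by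
        gcongr
        · exact mul_rpow_one_sub_le hn hε (by linarith) hr₀ hr₂
        · exact rpow_div_sq_mul_le hn hε hε₀ hr₁
    _ = 2 * n ^ ((4 : ℝ) / 3 - 2 * ε) := by
        rw [Real.sqrt_sq (by positivity)]
        ring

end Cells

/-- in a point-weighted cell decomposition of an extremal configuration,
one can refine the line set so that each remaining line meets many cells. -/
theorem refine_lines_meet_many_cells :
    ∃ ε₀ : ℝ, 0 < ε₀ ∧ ∀ ε : ℝ, 0 < ε → ε ≤ ε₀ →
      ∃ (N₀ : ℕ) (c : ℝ), 0 < c ∧ ∀ N : ℕ, N₀ ≤ N →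
        ∀ (L : Finset (Set Point)) (P : Finset Point) (r : ℕ)
          (cells : Fin (r ^ 2) → Finset Point),
          ExtremalConfig N ε L P →
          (N : ℝ) ^ ((1 : ℝ)/3 - ε) ≤ r → (r : ℝ) ≤ (N : ℝ) ^ ((1 : ℝ)/3 + ε) →
          (∀ i j, i ≠ j → Disjoint (cells i) (cells j)) →
          P = Finset.univ.biUnion cells →
          (∀ i, ((cells i).card : ℝ) ≤ (N : ℝ) ^ ((1 : ℝ) + ε) / (r : ℝ) ^ 2) →
          ∃ L' ⊆ L,
            c * (N : ℝ) ^ ((4 : ℝ)/3 - ε) ≤ incCount L' P ∧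
            ∀ l ∈ L',
              (r : ℝ) ^ ((1 : ℝ) - 20 * ε) ≤
                ((Finset.univ.filter fun i => ∃ p ∈ cells i, p ∈ l).card : ℝ) := by
  refine ⟨1 / 30, by norm_num, fun ε hε hε₀ => ⟨⌈(4 : ℝ) ^ ε⁻¹⌉₊ + 1, 1 / 2, by norm_num, ?_⟩⟩
  rintro N hN₀ L P r cells ⟨hL, -, hLN, -, hPN, hinc⟩ hr₁ hr₂ hdisj rfl hcell
  set good : Set Point → Prop := fun l =>
    (r : ℝ) ^ ((1 : ℝ) - 20 * ε) ≤ ((cellsMeeting cells l).card : ℝ)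
  refine ⟨L.filter good, Finset.filter_subset _ _, ?_, fun l hl => (Finset.mem_filter.1 hl).2⟩
  have hN : (1 : ℝ) ≤ N := by exact_mod_cast (by omega : 1 ≤ N)
  have hNε : (4 : ℝ) ≤ N ^ ε := calc
    (4 : ℝ) = ((4 : ℝ) ^ ε⁻¹) ^ ε := (Real.rpow_inv_rpow (by norm_num) hε.ne').symm
    _ ≤ N ^ ε := by
      gcongr
      exact (Nat.le_ceil _).trans (by exact_mod_cast (by omega : ⌈(4 : ℝ) ^ ε⁻¹⌉₊ ≤ N))
  have hbad : (incCount (L.filter (¬ good ·)) (Finset.univ.biUnion cells) : ℝ) ≤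
      2 * N ^ ((4 : ℝ) / 3 - 2 * ε) :=
    incCount_le_of_meets_few_cells (fun l hl => hL l (Finset.mem_filter.1 hl).1)
      (fun i j => hdisj i j) hN hε hε₀ hr₁ hr₂
      ((Nat.cast_le.2 (Finset.card_filter_le _ _)).trans hLN) hPN hcell
      fun l hl => (not_le.1 (Finset.mem_filter.1 hl).2).le
  have hsplit := incCount_filter_add_incCount_filter_not L (Finset.univ.biUnion cells) good
  have hX : (N : ℝ) ^ ((4 : ℝ) / 3 - ε) = N ^ ((4 : ℝ) / 3 - 2 * ε) * N ^ ε := by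
    rw [← Real.rpow_add (by linarith)]
    ring_nf
  have hX₀ : (0 : ℝ) ≤ N ^ ((4 : ℝ) / 3 - 2 * ε) := by positivity
  rw [← Nat.cast_inj (R := ℝ), Nat.cast_add] at hsplit
  nlinarith
end
end

section
/- Let c_a and c_b be unit circles in ℝ² whose centers are at distance d with 0 < d < 2. Let p₁ ≠ p₂ be points of c_a with p₁ ∉ c_b and p₂ ∉ c_b, and let A be one of the two open arcs of c_a with endpoints p₁ and p₂. Then |A ∩ c_b| = 1 if and only if exactly one of p₁, p₂ lies in the open unit disk bounded by c_b; otherwise |A ∩ c_b| ∈ {0, 2}. -/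
/-!
Parametrize `c_a` by `t ↦ q_a + e^{it}`. By the law of cosines the point of parameter `t` lies on
`c_b` iff `cos (t - φ) = d / 2`, and in the open disk of `c_b` iff `cos (t - φ) > d / 2`, where `φ`
is the direction of `q_b - q_a`. The two open arcs with endpoints `p₁, p₂` are the images of
complementary parameter intervals, and they are separated from each other, so each is a
connected component. On an interval of length less than `2π` the equation `cos (t - φ) = d / 2`
has at most two solutions, and since `0 < d / 2 < 1` each of them is a strict crossing of the
level `d / 2`. Hence the number of crossings on an arc is even exactly when both endpoints lie on
the same side of `c_b`.
-/

abbrev EPoint := EuclideanSpace ℝ (Fin 2)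

open Set Real Filter Topology Function Metric

section SignChange

variable {f : ℝ → ℝ} {a b c z : ℝ}

theorem ContinuousOn.lt_iff_lt_of_forall_ne (hf : ContinuousOn f (Icc a b)) (hab : a ≤ b)
    (ha : f a ≠ c) (hb : f b ≠ c) (h : ∀ t ∈ Ioo a b, f t ≠ c) : c < f a ↔ c < f b := by
  constructor <;> intro hc <;> by_contra hc'
  · obtain ⟨t, ht, hft⟩ := intermediate_value_Ioo' hab hf ⟨lt_of_le_of_ne (not_lt.1 hc') hb, hc⟩
    exact h t ht hft
  · obtain ⟨t, ht, hft⟩ := intermediate_value_Ioo hab hf ⟨lt_of_le_of_ne (not_lt.1 hc') ha, hc⟩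
    exact h t ht hft

theorem ContinuousOn.lt_iff_not_lt_of_unique_root (hf : ContinuousOn f (Icc a b))
    (hz : z ∈ Ioo a b) (ha : f a ≠ c) (hb : f b ≠ c) (hroot : ∀ t ∈ Ioo a b, f t = c ↔ t = z)
    (hext : ¬IsLocalExtr f z) : c < f a ↔ ¬c < f b := by
  have hne : ∀ t ∈ Ioo a b, t ≠ z → f t ≠ c := fun t ht => (hroot t ht).not.2
  have hleft : ∀ t ∈ Ioo a z, c < f t ↔ c < f a := fun t ht =>
    ((hf.mono (Icc_subset_Icc_right (ht.2.trans hz.2).le)).lt_iff_lt_of_forall_ne ht.1.le ha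
      (hne t ⟨ht.1, ht.2.trans hz.2⟩ ht.2.ne) fun s hs =>
        hne s ⟨hs.1, hs.2.trans (ht.2.trans hz.2)⟩ (hs.2.trans ht.2).ne).symm
  have hright : ∀ t ∈ Ioo z b, c < f t ↔ c < f b := fun t ht =>
    (hf.mono (Icc_subset_Icc_left (hz.1.trans ht.1).le)).lt_iff_lt_of_forall_ne ht.2.le
      (hne t ⟨hz.1.trans ht.1, ht.2⟩ ht.1.ne') hb fun s hs =>
        hne s ⟨hz.1.trans (ht.1.trans hs.1), hs.2⟩ (ht.1.trans hs.1).ne'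
  -- without a sign change, `f - c` keeps one sign around its zero `z`, making `z` an extremum
  by_contra hsame
  have hside : ∀ t ∈ Ioo a b, t ≠ z → (c < f t ↔ c < f a) := fun t ht htz => by
    rcases htz.lt_or_gt with h | h
    · exact hleft t ⟨ht.1, h⟩
    · rw [hright t ⟨h, ht.2⟩]
      tauto
  have hfz : f z = c := (hroot z hz).2 rfl
  apply hext
  by_cases hpos : c < f a
  · refine Or.inl (eventually_of_mem (Ioo_mem_nhds hz.1 hz.2) fun t ht => ?_)
    rcases eq_or_ne t z with rfl | htz
    · exact le_rfl
    · exact hfz ▸ ((hside t ht htz).2 hpos).le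
  · refine Or.inr (eventually_of_mem (Ioo_mem_nhds hz.1 hz.2) fun t ht => ?_)
    rcases eq_or_ne t z with rfl | htz
    · exact le_rfl
    · exact hfz ▸ not_lt.1 (mt (hside t ht htz).1 hpos)

theorem ContinuousOn.lt_iff_lt_of_two_roots {w : ℝ} (hf : ContinuousOn f (Icc a b))
    (hz : z ∈ Ioo a b) (hw : w ∈ Ioo a b) (hzw : z < w) (ha : f a ≠ c) (hb : f b ≠ c)
    (hroots : ∀ t ∈ Ioo a b, f t = c ↔ t = z ∨ t = w) (hextz : ¬IsLocalExtr f z)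
    (hextw : ¬IsLocalExtr f w) : c < f a ↔ c < f b := by
  obtain ⟨m, hzm, hmw⟩ := exists_between hzw
  have hm : m ∈ Ioo a b := ⟨hz.1.trans hzm, hmw.trans hw.2⟩
  have hfm : f m ≠ c := fun h => by
    rcases (hroots m hm).1 h with rfl | rfl
    exacts [hzm.false, hmw.false]
  have h₁ := (hf.mono (Icc_subset_Icc_right hm.2.le)).lt_iff_not_lt_of_unique_root ⟨hz.1, hzm⟩
    ha hfm (fun t ht => by rw [hroots t ⟨ht.1, ht.2.trans hm.2⟩, or_iff_left (ht.2.trans hmw).ne])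
    hextz
  have h₂ := (hf.mono (Icc_subset_Icc_left hm.1.le)).lt_iff_not_lt_of_unique_root ⟨hmw, hw.2⟩
    hfm hb (fun t ht => by rw [hroots t ⟨hm.1.trans ht.1, ht.2⟩, or_iff_right (hzm.trans ht.1).ne'])
    hextw
  tauto

theorem ContinuousOn.even_ncard_roots_iff (hf : ContinuousOn f (Icc a b)) (hab : a ≤ b)
    (ha : f a ≠ c) (hb : f b ≠ c) (hext : ∀ z ∈ Ioo a b, f z = c → ¬IsLocalExtr f z)
    (hfin : {t ∈ Ioo a b | f t = c}.Finite) (hle : {t ∈ Ioo a b | f t = c}.ncard ≤ 2) :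
    Even {t ∈ Ioo a b | f t = c}.ncard ↔ (c < f a ↔ c < f b) := by
  set Z := {t ∈ Ioo a b | f t = c}
  have hZ : ∀ t ∈ Ioo a b, f t = c ↔ t ∈ Z := fun t ht => ⟨fun h => ⟨ht, h⟩, And.right⟩
  interval_cases hn : Z.ncard
  · have hZ0 := (ncard_eq_zero hfin).1 hn
    simp only [Nat.even_iff, Nat.zero_mod, true_iff]
    exact hf.lt_iff_lt_of_forall_ne hab ha hb fun t ht hft => by
      simpa [hZ0] using (hZ t ht).1 hft
  · obtain ⟨z, hZ1⟩ := ncard_eq_one.1 hn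
    have hz : z ∈ Z := hZ1 ▸ mem_singleton z
    have hflip := hf.lt_iff_not_lt_of_unique_root hz.1 ha hb
      (fun t ht => by rw [hZ t ht, hZ1, mem_singleton_iff]) (hext z hz.1 hz.2)
    simp only [Nat.not_even_one, false_iff]
    tauto
  · obtain ⟨z, w, hzw, hZ2⟩ : ∃ z w, z < w ∧ Z = {z, w} := by
      obtain ⟨z, w, hne, hZ2⟩ := ncard_eq_two.1 hn
      rcases hne.lt_or_gt with h | h
      · exact ⟨z, w, h, hZ2⟩
      · exact ⟨w, z, h, hZ2.trans (pair_comm z w)⟩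
    have hz : z ∈ Z := hZ2 ▸ mem_insert z {w}
    have hw : w ∈ Z := hZ2 ▸ mem_insert_of_mem z rfl
    simp only [even_two, true_iff]
    exact hf.lt_iff_lt_of_two_roots hz.1 hw.1 hzw ha hb
      (fun t ht => by rw [hZ t ht, hZ2, mem_insert_iff, mem_singleton_iff])
      (hext z hz.1 hz.2) (hext w hw.1 hw.2)

end SignChange

theorem Real.Angle.coe_injOn_Ioo {a b : ℝ} (hab : b ≤ a + 2 * π) :
    InjOn ((↑) : ℝ → Angle) (Ioo a b) := by
  have : Fact (0 < 2 * π) := ⟨two_pi_pos⟩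
  intro t ht t' ht' h
  exact (AddCircle.coe_eq_coe_iff_of_mem_Ico (a := a)
    ⟨ht.1.le, ht.2.trans_le hab⟩ ⟨ht'.1.le, ht'.2.trans_le hab⟩).1 h

theorem encard_cos_sub_roots_le_two {a b : ℝ} (φ c : ℝ) (hab : b ≤ a + 2 * π) :
    {t ∈ Ioo a b | cos (t - φ) = c}.encard ≤ 2 := by
  set Z := {t ∈ Ioo a b | cos (t - φ) = c}
  rcases Z.eq_empty_or_nonempty with hZ | ⟨z, hz⟩
  · simp [hZ]
  have hrefl : ∀ t ∈ Z \ {z}, (t : Angle) = (2 * φ - z : ℝ) := by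
    rintro t ⟨⟨ht, htc⟩, htz⟩
    have hcos : Angle.cos (t - φ : ℝ) = Angle.cos (z - φ : ℝ) := by
      rw [Angle.cos_coe, Angle.cos_coe, htc, hz.2]
    rcases Angle.cos_eq_iff_eq_or_eq_neg.1 hcos with h | h
    · refine absurd ((Angle.coe_injOn_Ioo hab) ht hz.1 ?_) htz
      simpa [Angle.coe_sub] using h
    · rw [Angle.coe_sub, Angle.coe_sub, eq_neg_iff_add_eq_zero] at h
      rw [two_mul, Angle.coe_sub, Angle.coe_add, ← sub_eq_zero, ← h]
      abel
  have hle : (Z \ {z}).encard ≤ 1 := encard_le_one_iff.2 fun t t' ht ht' =>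
    Angle.coe_injOn_Ioo hab ht.1.1 ht'.1.1 ((hrefl t ht).trans (hrefl t' ht').symm)
  rw [← encard_sdiff_singleton_add_one hz]
  calc (Z \ {z}).encard + 1 ≤ 1 + 1 := by gcongr
    _ = 2 := one_add_one_eq_two

theorem not_isLocalExtr_cos_sub {φ c z : ℝ} (hc : |c| < 1) (hz : cos (z - φ) = c) :
    ¬IsLocalExtr (fun t => cos (t - φ)) z := by
  intro hext
  have hderiv : HasDerivAt (fun t => cos (t - φ)) (-sin (z - φ)) z := by
    simpa using ((hasDerivAt_id z).sub_const φ).cos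
  have hsin : sin (z - φ) = 0 := neg_eq_zero.1 (hext.hasDerivAt_eq_zero hderiv)
  have hpyth := sin_sq_add_cos_sq (z - φ)
  rw [hsin, hz] at hpyth
  exact hc.ne (by nlinarith [abs_mul_abs_self c, abs_nonneg c])

theorem connectedComponentIn_union_eq_left {X : Type*} [TopologicalSpace X] {U V : Set X} {x : X}
    (hU : IsPreconnected U) (hx : x ∈ U) (hUV : Disjoint (closure U) V)
    (hVU : Disjoint U (closure V)) : connectedComponentIn (U ∪ V) x = U := by
  refine Subset.antisymm ?_ (hU.subset_connectedComponentIn hx subset_union_left)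
  have hC := isPreconnected_connectedComponentIn (F := U ∪ V) (x := x)
  have hCUV : connectedComponentIn (U ∪ V) x ⊆ U ∪ V := connectedComponentIn_subset _ _
  have hxC : x ∈ connectedComponentIn (U ∪ V) x := mem_connectedComponentIn (Or.inl hx)
  have hdisj : connectedComponentIn (U ∪ V) x ∩ (closure U ∩ closure V) = ∅ := by
    refine eq_empty_of_forall_notMem fun y ⟨hy, hyU, hyV⟩ => ?_
    rcases hCUV hy with hy' | hy'
    exacts [hVU.ne_of_mem hy' hyV rfl, hUV.ne_of_mem hyU hy' rfl]
  rcases isPreconnected_iff_subset_of_disjoint_closed.1 hC _ _ isClosed_closure isClosed_closure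
      (hCUV.trans (union_subset_union subset_closure subset_closure)) hdisj with h | h
  · exact fun y hy => (hCUV hy).resolve_right fun hyV => hUV.ne_of_mem (h hy) hyV rfl
  · exact absurd (h hxC) (hVU.notMem_of_mem_left hx)

structure IsSimpleLoop {X : Type*} [TopologicalSpace X] (γ : ℝ → X) (T : ℝ) : Prop where
  continuous : Continuous γ
  pos : 0 < T
  periodic : Periodic γ T
  apply_ne : ∀ ⦃t t' : ℝ⦄, t < t' → t' < t + T → γ t ≠ γ t'

namespace IsSimpleLoop

variable {X : Type*} [TopologicalSpace X] {γ : ℝ → X} {T : ℝ}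

theorem comp {Y : Type*} [TopologicalSpace Y] (hγ : IsSimpleLoop γ T) {f : X → Y}
    (hf : Continuous f) (hinj : Injective f) : IsSimpleLoop (f ∘ γ) T where
  continuous := hf.comp hγ.continuous
  pos := hγ.pos
  periodic := hγ.periodic.comp f
  apply_ne _ _ h h' := hinj.ne (hγ.apply_ne h h')

theorem injOn_Ioo (hγ : IsSimpleLoop γ T) {a b : ℝ} (hab : b ≤ a + T) : InjOn γ (Ioo a b) := by
  intro t ht t' ht' he
  by_contra hne
  rcases lt_or_gt_of_ne hne with h | h
  · exact hγ.apply_ne h (by linarith [ht.1, ht'.2]) he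
  · exact hγ.apply_ne h (by linarith [ht'.1, ht.2]) he.symm

theorem ncard_image_Ioo_inter (hγ : IsSimpleLoop γ T) {a b : ℝ} (hab : b ≤ a + T) (S : Set X) :
    (γ '' Ioo a b ∩ S).ncard = {t ∈ Ioo a b | γ t ∈ S}.ncard := by
  rw [← image_inter_preimage, ((hγ.injOn_Ioo hab).mono inter_subset_left).ncard_image]
  rfl

theorem exists_param_lt_lt_add (hγ : IsSimpleLoop γ T) {p₁ p₂ : X} (hp₁ : p₁ ∈ range γ)
    (hp₂ : p₂ ∈ range γ) (hne : p₁ ≠ p₂) :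
    ∃ s₁ s₂, s₁ < s₂ ∧ s₂ < s₁ + T ∧ γ s₁ = p₁ ∧ γ s₂ = p₂ := by
  obtain ⟨s₁, rfl⟩ := hp₁
  obtain ⟨x, rfl⟩ := hp₂
  obtain ⟨s₂, hs₂, hx⟩ := hγ.periodic.exists_mem_Ioc hγ.pos x s₁
  refine ⟨s₁, s₂, hs₂.1, hs₂.2.lt_of_ne ?_, rfl, hx.symm⟩
  rintro rfl
  exact hne (by rw [hx, hγ.periodic])

theorem range_sdiff_pair (hγ : IsSimpleLoop γ T) {s s' : ℝ} (h : s < s') (h' : s' < s + T) :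
    range γ \ {γ s, γ s'} = γ '' Ioo s s' ∪ γ '' Ioo s' (s + T) := by
  ext y
  simp only [Set.mem_sdiff, mem_insert_iff, mem_singleton_iff, not_or]
  constructor
  · rintro ⟨⟨x, rfl⟩, hys, hys'⟩
    obtain ⟨t, ht, hx⟩ := hγ.periodic.exists_mem_Ioc hγ.pos x s
    rw [hx] at hys hys' ⊢
    have htT : t ≠ s + T := fun h => hys (by rw [h, hγ.periodic])
    rcases lt_or_gt_of_ne fun h => hys' (congrArg γ h) with h | h
    · exact Or.inl (mem_image_of_mem γ ⟨ht.1, h⟩)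
    · exact Or.inr (mem_image_of_mem γ ⟨h, ht.2.lt_of_ne htT⟩)
  · rintro (⟨t, ht, rfl⟩ | ⟨t, ht, rfl⟩)
    · exact ⟨mem_range_self t, (hγ.apply_ne ht.1 (by linarith [ht.2])).symm,
        hγ.apply_ne ht.2 (by linarith [ht.1])⟩
    · exact ⟨mem_range_self t, (hγ.apply_ne (h.trans ht.1) ht.2).symm,
        (hγ.apply_ne ht.1 (by linarith [ht.2])).symm⟩

theorem exists_connectedComponentIn_eq_image [T2Space X] (hγ : IsSimpleLoop γ T) {p₁ p₂ x : X}
    (hp₁ : p₁ ∈ range γ) (hp₂ : p₂ ∈ range γ) (hne : p₁ ≠ p₂) (hx : x ∈ range γ \ {p₁, p₂}) :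
    ∃ a b, a < b ∧ b < a + T ∧ (γ a = p₁ ∧ γ b = p₂ ∨ γ a = p₂ ∧ γ b = p₁) ∧
      connectedComponentIn (range γ \ {p₁, p₂}) x = γ '' Ioo a b := by
  obtain ⟨s, s', h, h', rfl, rfl⟩ := hγ.exists_param_lt_lt_add hp₁ hp₂ hne
  have hclosure (a b : ℝ) : closure (γ '' Ioo a b) ⊆ γ '' Icc a b :=
    closure_minimal (image_mono Ioo_subset_Icc_self) (isCompact_Icc.image hγ.continuous).isClosed
  have hUV : Disjoint (closure (γ '' Ioo s s')) (γ '' Ioo s' (s + T)) :=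
    (disjoint_image_image fun b hb c hc =>
      hγ.apply_ne (hb.2.trans_lt hc.1) (by linarith [hb.1, hc.2])).mono_left (hclosure s s')
  have hVU : Disjoint (γ '' Ioo s s') (closure (γ '' Ioo s' (s + T))) :=
    (disjoint_image_image fun b hb c hc =>
      hγ.apply_ne (hb.2.trans_le hc.1) (by linarith [hb.1, hc.2])).mono_right (hclosure s' (s + T))
  have hconn (a b : ℝ) : IsPreconnected (γ '' Ioo a b) :=
    isPreconnected_Ioo.image _ hγ.continuous.continuousOn
  rw [hγ.range_sdiff_pair h h'] at hx ⊢
  rcases hx with hx | hx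
  · exact ⟨s, s', h, h', Or.inl ⟨rfl, rfl⟩,
      connectedComponentIn_union_eq_left (hconn s s') hx hUV hVU⟩
  · refine ⟨s', s + T, h', by linarith, Or.inr ⟨rfl, hγ.periodic s⟩, ?_⟩
    rw [union_comm]
    exact connectedComponentIn_union_eq_left (hconn s' (s + T)) hx hVU.symm hUV.symm

end IsSimpleLoop

theorem isSimpleLoop_circleMap (c : ℂ) {R : ℝ} (hR : R ≠ 0) :
    IsSimpleLoop (circleMap c R) (2 * π) where
  continuous := continuous_circleMap c R
  pos := two_pi_pos
  periodic := periodic_circleMap c R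
  apply_ne _ _ h h' he :=
    h.ne (eq_of_circleMap_eq hR (by rw [abs_lt]; constructor <;> linarith) he)

theorem dist_circleMap_sq (c w : ℂ) (R t : ℝ) :
    dist (circleMap c R t) w ^ 2 =
      R ^ 2 + dist c w ^ 2 - 2 * R * dist c w * cos (t - Complex.arg (w - c)) := by
  have hsub : circleMap c R t - w = circleMap 0 R t - (w - c) := by
    rw [← circleMap_sub_center]; ring
  have hpyth_t := sin_sq_add_cos_sq t
  have hpyth_arg := sin_sq_add_cos_sq (Complex.arg (w - c))
  rw [dist_comm c w, Complex.dist_eq, Complex.dist_eq, hsub, Complex.sq_norm,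
    Complex.normSq_apply, Complex.sub_re, Complex.sub_im, circleMap_zero_re, circleMap_zero_im,
    ← Complex.norm_mul_cos_arg, ← Complex.norm_mul_sin_arg, cos_sub]
  linear_combination R ^ 2 * hpyth_t + ‖w - c‖ ^ 2 * hpyth_arg

noncomputable def circleParam (q : EPoint) : ℝ → EPoint :=
  Complex.orthonormalBasisOneI.repr ∘ circleMap (Complex.orthonormalBasisOneI.repr.symm q) 1

theorem isSimpleLoop_circleParam (q : EPoint) : IsSimpleLoop (circleParam q) (2 * π) :=
  (isSimpleLoop_circleMap _ one_ne_zero).comp Complex.orthonormalBasisOneI.repr.continuous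
    Complex.orthonormalBasisOneI.repr.injective

theorem range_circleParam (q : EPoint) : range (circleParam q) = sphere q 1 := by
  rw [circleParam, range_comp, range_circleMap, abs_one, LinearIsometryEquiv.image_sphere,
    LinearIsometryEquiv.apply_symm_apply]

theorem exists_circleParam_mem_iff_cos {qa qb : EPoint} (hd : 0 < dist qa qb) :
    ∃ φ : ℝ, ∀ t, (circleParam qa t ∈ sphere qb 1 ↔ cos (t - φ) = dist qa qb / 2) ∧
      (circleParam qa t ∈ ball qb 1 ↔ dist qa qb / 2 < cos (t - φ)) := by
  set e := Complex.orthonormalBasisOneI.repr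
  refine ⟨Complex.arg (e.symm qb - e.symm qa), fun t => ?_⟩
  have hlaw := dist_circleMap_sq (e.symm qa) (e.symm qb) 1 t
  rw [← e.dist_map, ← e.dist_map, e.apply_symm_apply, e.apply_symm_apply] at hlaw
  change dist (circleParam qa t) qb ^ 2 = _ at hlaw
  have hD := dist_nonneg (x := circleParam qa t) (y := qb)
  rw [mem_sphere, mem_ball, ← sq_eq_sq₀ hD zero_le_one, ← sq_lt_sq₀ hD zero_le_one, hlaw]
  constructor
  · constructor <;> intro h <;> nlinarith
  · constructor <;> intro h <;> nlinarith

theorem ncard_circleParam_image_Ioo_inter_sphere {qa qb : EPoint} (hd0 : 0 < dist qa qb)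
    (hd2 : dist qa qb < 2) {a b : ℝ} (hab : a < b) (hba : b ≤ a + 2 * π)
    (ha : circleParam qa a ∉ sphere qb 1) (hb : circleParam qa b ∉ sphere qb 1) :
    (circleParam qa '' Ioo a b ∩ sphere qb 1).ncard ≤ 2 ∧
      (Even (circleParam qa '' Ioo a b ∩ sphere qb 1).ncard ↔
        (circleParam qa a ∈ ball qb 1 ↔ circleParam qa b ∈ ball qb 1)) := by
  obtain ⟨φ, hφ⟩ := exists_circleParam_mem_iff_cos hd0
  have hc : |dist qa qb / 2| < 1 := by rw [abs_lt]; constructor <;> linarith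
  simp only [(isSimpleLoop_circleParam qa).ncard_image_Ioo_inter hba, hφ] at ha hb ⊢
  obtain ⟨hfin, hle⟩ :=
    encard_le_coe_iff_finite_ncard_le.1 (encard_cos_sub_roots_le_two φ (dist qa qb / 2) hba)
  exact ⟨hle, (by fun_prop : ContinuousOn (fun t => cos (t - φ)) _).even_ncard_roots_iff hab.le
    ha hb (fun _ _ hz => not_isLocalExtr_cos_sub hc hz) hfin hle⟩

/-- let `c_a`, `c_b` be unit circles whose centers are at distance
`0 < d < 2`, and let `p₁ ≠ p₂` be points of `c_a` not lying on `c_b`.  An open arc `A` of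
`c_a` with endpoints `p₁, p₂` meets `c_b` in exactly one point iff exactly one of
`p₁, p₂` lies in the open unit disk bounded by `c_b`; otherwise `|A ∩ c_b| ∈ {0, 2}`. -/
theorem arc_crossing_dichotomy (qa qb : EPoint)
    (hd0 : 0 < dist qa qb) (hd2 : dist qa qb < 2)
    (p₁ p₂ : EPoint) (hp₁ : p₁ ∈ Metric.sphere qa 1) (hp₂ : p₂ ∈ Metric.sphere qa 1)
    (hne : p₁ ≠ p₂) (hp₁b : p₁ ∉ Metric.sphere qb 1) (hp₂b : p₂ ∉ Metric.sphere qb 1)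
    (x : EPoint) (hx : x ∈ Metric.sphere qa 1 \ {p₁, p₂})
    (A : Set EPoint) (hA : A = connectedComponentIn (Metric.sphere qa 1 \ {p₁, p₂}) x) :
    ((A ∩ Metric.sphere qb 1).ncard = 1 ↔
      Xor' (p₁ ∈ Metric.ball qb 1) (p₂ ∈ Metric.ball qb 1)) ∧
    (¬ Xor' (p₁ ∈ Metric.ball qb 1) (p₂ ∈ Metric.ball qb 1) →
      (A ∩ Metric.sphere qb 1).ncard = 0 ∨ (A ∩ Metric.sphere qb 1).ncard = 2) := by
  rw [← range_circleParam] at hp₁ hp₂ hx hA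
  obtain ⟨a, b, hab, hba, hends, hAab⟩ :=
    (isSimpleLoop_circleParam qa).exists_connectedComponentIn_eq_image hp₁ hp₂ hne hx
  obtain ⟨hle, heven⟩ : (A ∩ sphere qb 1).ncard ≤ 2 ∧
      (Even (A ∩ sphere qb 1).ncard ↔ (p₁ ∈ ball qb 1 ↔ p₂ ∈ ball qb 1)) := by
    rw [hA, hAab]
    rcases hends with ⟨rfl, rfl⟩ | ⟨rfl, rfl⟩
    · exact ncard_circleParam_image_Ioo_inter_sphere hd0 hd2 hab hba.le hp₁b hp₂b
    · rw [Iff.comm (a := circleParam qa b ∈ _)]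
      exact ncard_circleParam_image_Ioo_inter_sphere hd0 hd2 hab hba.le hp₂b hp₁b
  change (_ ↔ Xor _ _) ∧ (¬Xor _ _ → _)
  rw [xor_iff_not_iff, ← heven]
  interval_cases (A ∩ sphere qb 1).ncard <;> decide
end
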